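/- Let n ≥ 4, 1 < k < n−1 with k even, π = τφτ⁻¹φ, and ρ = φτ. Then π^{k/2} τ π^{k/2} φ ρ⁻¹ is the 3-cycle (k k+1 k+2). -/

import Mathlib

/-- The flip of the oval track puzzle: reverses the block of the first `k`
positions (0-indexed `0,…,k-1`, i.e. tiles `1,…,k`) and fixes the rest. -/
def otFlip (n k : ℕ) : Equiv.Perm (Fin n) :=
  Function.Involutive.toPerm
    (fun i => if h : i.val < k ∧ k ≤ n then ⟨k - 1 - i.val, by omega⟩ else i)
    (by
      intro i
      dsimp only
      by_cases h1 : i.val < k ∧ k ≤ n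
      · rw [dif_pos h1]
        rw [dif_pos (show (⟨k - 1 - i.val, by omega⟩ : Fin n).val < k ∧ k ≤ n from
          ⟨by simp; omega, h1.2⟩)]
        exact Fin.ext (by simp; omega)
      · rw [dif_neg h1, dif_neg h1])

/-- The cycle on `Fin n` given (0-indexed) by a list of natural numbers. -/
def otCycle (n : ℕ) (l : List ℕ) : Equiv.Perm (Fin n) :=
  (l.filterMap (fun a => if h : a < n then some ⟨a, h⟩ else none)).formPerm

/-- Type I: preserves the parity of every tile label. -/
def TypeI (n : ℕ) (σ : Equiv.Perm (Fin n)) : Prop :=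
  ∀ i : Fin n, (σ i).val % 2 = i.val % 2

/-- Type II: reverses the parity of every tile label. -/
def TypeII (n : ℕ) (σ : Equiv.Perm (Fin n)) : Prop :=
  ∀ i : Fin n, (σ i).val % 2 ≠ i.val % 2

/-!
On the block `{0, …, k}` (0-indexed) the commutator `π = τ φ τ⁻¹ φ` acts as the square of the
`(k+1)`-cycle `c = (0 1 … k)` and it fixes every other position. Since `c` has order `k + 1`,
`π ^ (k/2) = c ^ k = c⁻¹`, so the product is `(c⁻¹ τ c⁻¹) (φ τ⁻¹ φ)`. Computing both factors
pointwise, they cancel away from the positions `k - 1, k, k + 1`, which they permute cyclically.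
-/

open Equiv Equiv.Perm Fin

lemma val_finRotate {n : ℕ} (i : Fin n) :
    (finRotate n i : ℕ) = if (i : ℕ) + 1 = n then 0 else (i : ℕ) + 1 := by
  obtain ⟨m, rfl⟩ := Nat.exists_eq_succ_of_ne_zero i.pos.ne'
  rw [coe_finRotate]
  simp only [Fin.ext_iff, val_last]
  grind

lemma val_finRotate_inv {n : ℕ} (i : Fin n) :
    ((finRotate n)⁻¹ i : ℕ) = if (i : ℕ) = 0 then n - 1 else (i : ℕ) - 1 := by
  have h := congrArg Fin.val ((finRotate n).apply_symm_apply i)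
  rw [val_finRotate] at h
  have := ((finRotate n).symm i).isLt
  change ((finRotate n).symm i : ℕ) = _
  split_ifs at h ⊢ <;> omega

lemma val_cycleRange {n : ℕ} (j i : Fin n) :
    (cycleRange j i : ℕ) = if (i : ℕ) < j then (i : ℕ) + 1 else if (i : ℕ) = j then 0 else i := by
  rcases lt_trichotomy i j with h | rfl | h
  · rw [coe_cycleRange_of_lt h, if_pos (Fin.lt_def.mp h)]
  · rw [coe_cycleRange_of_le le_rfl]; simp
  · rw [cycleRange_of_gt h]
    have := Fin.lt_def.mp h
    grind

lemma val_cycleRange_inv {n : ℕ} (j i : Fin n) :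
    ((cycleRange j)⁻¹ i : ℕ) =
      if (i : ℕ) = 0 then (j : ℕ) else if (i : ℕ) ≤ j then (i : ℕ) - 1 else (i : ℕ) := by
  have h := congrArg Fin.val ((cycleRange j).apply_symm_apply i)
  rw [val_cycleRange] at h
  change ((cycleRange j).symm i : ℕ) = _
  split_ifs at h ⊢ <;> omega

lemma val_otFlip {n k : ℕ} (hkn : k ≤ n) (i : Fin n) :
    (otFlip n k i : ℕ) = if (i : ℕ) < k then k - 1 - i else i := by
  change (if h : (i : ℕ) < k ∧ k ≤ n then (⟨k - 1 - i, by omega⟩ : Fin n) else i).val = _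
  by_cases h : (i : ℕ) < k <;> simp [h, hkn]

lemma otFlip_inv (n k : ℕ) : (otFlip n k)⁻¹ = otFlip n k :=
  Function.Involutive.toPerm_symm _

lemma orderOf_cycleRange {n : ℕ} (j : Fin n) : orderOf (cycleRange j) = j + 1 := by
  have : NeZero n := j.neZero
  by_cases hj : j = 0
  · subst hj; simp
  · rw [← lcm_cycleType, cycleType_cycleRange hj]; simp

lemma finRotate_mul_otFlip_mul_finRotate_inv_mul_otFlip_eq_cycleRange_sq {n k : ℕ} (hk : k < n) :
    finRotate n * otFlip n k * (finRotate n)⁻¹ * otFlip n k = cycleRange ⟨k, hk⟩ ^ 2 := by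
  ext i
  simp only [Perm.mul_apply, pow_two, val_finRotate, val_finRotate_inv, val_otFlip hk.le,
    val_cycleRange]
  grind

lemma cycleRange_pow_val_eq_inv {n : ℕ} (j : Fin n) : cycleRange j ^ (j : ℕ) = (cycleRange j)⁻¹ :=
  eq_inv_of_mul_eq_one_left (by rw [← pow_succ, ← orderOf_cycleRange, pow_orderOf_eq_one])

lemma val_otCycle_three {n a b c : ℕ} (ha : a < n) (hb : b < n) (hc : c < n)
    (hab : a ≠ b) (hbc : b ≠ c) (hac : a ≠ c) (i : Fin n) :
    (otCycle n [a, b, c] i : ℕ) =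
      if (i : ℕ) = a then b else if (i : ℕ) = b then c else if (i : ℕ) = c then a else i := by
  simp only [otCycle, List.filterMap_cons, List.filterMap_nil, dif_pos ha, dif_pos hb,
    dif_pos hc, List.formPerm_cons_cons, List.formPerm_singleton, mul_one, Perm.mul_apply,
    swap_apply_def, Fin.ext_iff, apply_ite Fin.val]
  grind

lemma val_otFlip_finRotate_inv_otFlip {n k : ℕ} (hk0 : 0 < k) (hk : k < n) (i : Fin n) :
    (otFlip n k ((finRotate n)⁻¹ (otFlip n k i)) : ℕ) =
      if (i : ℕ) + 1 < k then (i : ℕ) + 1 else if (i : ℕ) + 1 = k then n - 1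
        else if (i : ℕ) = k then 0 else (i : ℕ) - 1 := by
  simp only [val_finRotate_inv, val_otFlip hk.le]
  grind

lemma val_cycleRange_inv_finRotate_cycleRange_inv {n : ℕ} (j : Fin n) (hj : (j : ℕ) + 1 < n)
    (i : Fin n) :
    ((cycleRange j)⁻¹ (finRotate n ((cycleRange j)⁻¹ i)) : ℕ) =
      if (i : ℕ) = 0 then (j : ℕ) + 1 else if (i : ℕ) ≤ j then (i : ℕ) - 1
        else if (i : ℕ) + 1 = n then j else (i : ℕ) + 1 := by
  simp only [val_finRotate, val_cycleRange_inv]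
  grind

theorem stmt14_general (n k : ℕ) (hk1 : 1 < k) (hk2 : k < n - 1)
    (hke : Even k) :
    (finRotate n * otFlip n k * (finRotate n)⁻¹ * otFlip n k) ^ (k / 2) *
        finRotate n *
        (finRotate n * otFlip n k * (finRotate n)⁻¹ * otFlip n k) ^ (k / 2) *
        otFlip n k * (otFlip n k * finRotate n)⁻¹ =
      otCycle n [k - 1, k, k + 1] := by
  have hk : k < n := by omega
  rw [finRotate_mul_otFlip_mul_finRotate_inv_mul_otFlip_eq_cycleRange_sq hk, ← pow_mul,
    Nat.mul_div_cancel' hke.two_dvd, cycleRange_pow_val_eq_inv ⟨k, hk⟩]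
  ext i
  rw [val_otCycle_three (by omega) hk (by omega) (by omega) (by omega) (by omega)]
  simp only [mul_inv_rev, otFlip_inv, Perm.mul_apply]
  rw [val_cycleRange_inv_finRotate_cycleRange_inv _ (by simp; omega),
    val_otFlip_finRotate_inv_otFlip (by omega) hk, Fin.val_mk]
  grind

theorem stmt14 (n k : ℕ) (hn : 4 ≤ n) (hk1 : 1 < k) (hk2 : k < n - 1)
    (hke : Even k) :
    (finRotate n * otFlip n k * (finRotate n)⁻¹ * otFlip n k) ^ (k / 2) *
        finRotate n *
        (finRotate n * otFlip n k * (finRotate n)⁻¹ * otFlip n k) ^ (k / 2) *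
        otFlip n k * (otFlip n k * finRotate n)⁻¹ =
      otCycle n [k - 1, k, k + 1] :=
  stmt14_general n k hk1 hk2 hke
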